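/- Let $1 < p < \infty$. If $\sigma$ and $\omega$ are reverse doubling measures on $\mathbb{R}^n$ (i.e. there exist constants $c_\sigma, c_\omega < 1$ with $|Q|_\sigma \leq c_\sigma |2Q|_\sigma$ and $|Q|_\omega \leq c_\omega |2Q|_\omega$ for all cubes $Q$), then $\mathcal{A}_p(\sigma, \omega) \lesssim A_p(\sigma, \omega)$, with implicit constant depending on $p$, $n$, $c_\sigma$, $c_\omega$. -/

import Mathlib

open MeasureTheory Set ENNReal

/-- The axis-parallel half-open cube with corner `a` and sidelength `l`. -/
def cubeSet {n : ℕ} (a : Fin n → ℝ) (l : ℝ) : Set (Fin n → ℝ) :=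
  {x | ∀ i, x i ∈ Set.Ico (a i) (a i + l)}

/-- The concentric dilate `rQ` of the cube `Q` with corner `a` and sidelength `l`. -/
def dilateCube {n : ℕ} (a : Fin n → ℝ) (l r : ℝ) : Set (Fin n → ℝ) :=
  cubeSet (fun i => a i - (r - 1) * l / 2) (r * l)

/-- A measure is reverse doubling with constant `c < 1`: `|Q|_μ ≤ c |2Q|_μ` for all cubes. -/
def ReverseDoubling {n : ℕ} (μ : Measure (Fin n → ℝ)) (c : ℝ) : Prop :=
  ∀ (a : Fin n → ℝ) (l : ℝ), 0 < l →
    μ (cubeSet a l) ≤ ENNReal.ofReal c * μ (dilateCube a l 2)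

/-- The scalar two-weight Muckenhoupt characteristic `A_p(σ,ω)`. -/
noncomputable def scalarAp (n : ℕ) (p p' : ℝ) (σ ω : Measure (Fin n → ℝ)) : ℝ≥0∞ :=
  ⨆ (a : Fin n → ℝ) (l : ℝ) (_ : 0 < l),
    (σ (cubeSet a l) / ENNReal.ofReal (l ^ n)) ^ (1 / p') *
    (ω (cubeSet a l) / ENNReal.ofReal (l ^ n)) ^ (1 / p)

/-- The two-tailed Muckenhoupt characteristic `𝒜_p(σ,ω)`. -/
noncomputable def tailedAp (n : ℕ) (p p' : ℝ) (σ ω : Measure (Fin n → ℝ)) : ℝ≥0∞ :=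
  ⨆ (a : Fin n → ℝ) (l : ℝ) (_ : 0 < l),
    ((ENNReal.ofReal (l ^ n))⁻¹ *
      ∫⁻ x, ENNReal.ofReal ((l ^ n / (l + Metric.infDist x (cubeSet a l)) ^ n) ^ p) ∂ω) ^ (1 / p) *
    ((ENNReal.ofReal (l ^ n))⁻¹ *
      ∫⁻ x, ENNReal.ofReal ((l ^ n / (l + Metric.infDist x (cubeSet a l)) ^ n) ^ p') ∂σ) ^ (1 / p')

/-!
Cover `ℝⁿ` by the dilates `2ᵏQ`. Off `2ᵏ⁻¹Q` the kernel `ℓ(Q)ⁿ / (ℓ(Q) + dist(x, Q))ⁿ` is at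
most `(4 · 2⁻ᵏ)ⁿ`, so by subadditivity of `s ↦ s^{1/q}` each factor of `𝒜_p` is bounded by
`∑ₖ (4 · 2⁻ᵏ)ⁿ (|2ᵏQ|_μ / |Q|)^{1/q}`. In the product of the two series, a term with `k ≤ j`
is estimated by moving the `ω`-cube from `2ᵏQ` up to `2ʲQ` with reverse doubling, at the cost
`c_ω^{(j-k)/p}`, and then applying `A_p` on `2ʲQ`, at the cost `|2ʲQ| / |Q| = 2ʲⁿ`. This leaves
`16ⁿ 2⁻ᵏ c_ω^{(j-k)/p} A_p ≤ 16ⁿ t^{k+j} A_p` for any `t < 1` with `t² ≥ 1/2` and `t ≥ c_ω^{1/p}`;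
terms with `j ≤ k` are symmetric, and the double geometric series converges.
-/

theorem ENNReal.rpow_tsum_le_tsum_rpow {ι : Type*} (f : ι → ℝ≥0∞) {r : ℝ} (h0 : 0 < r)
    (h1 : r ≤ 1) : (∑' i, f i) ^ r ≤ ∑' i, f i ^ r := by
  classical
  have hfin (s : Finset ι) : (∑ i ∈ s, f i) ^ r ≤ ∑ i ∈ s, f i ^ r := by
    induction s using Finset.induction_on with
    | empty => simp [ENNReal.zero_rpow_of_pos h0]
    | insert i s hi ih =>
      rw [Finset.sum_insert hi, Finset.sum_insert hi]
      exact (ENNReal.rpow_add_le_add_rpow _ _ h0.le h1).trans (by gcongr)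
  rw [ENNReal.tsum_eq_iSup_sum, ← ENNReal.orderIsoRpow_apply r h0, OrderIso.map_iSup]
  exact iSup_le fun s => (hfin s).trans (ENNReal.sum_le_tsum s)

theorem ENNReal.tsum_mul_tsum_le_of_le_geometric {u v : ℕ → ℝ≥0∞} {M t : ℝ≥0∞}
    (h : ∀ k j, u k * v j ≤ M * t ^ (k + j)) :
    (∑' k, u k) * ∑' j, v j ≤ M * (1 - t)⁻¹ ^ 2 := by
  calc (∑' k, u k) * ∑' j, v j = ∑' k, ∑' j, u k * v j := by
        simp_rw [ENNReal.tsum_mul_left, ENNReal.tsum_mul_right]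
    _ ≤ ∑' k, ∑' j, M * t ^ k * t ^ j :=
        ENNReal.tsum_le_tsum fun k => ENNReal.tsum_le_tsum fun j =>
          (h k j).trans_eq (by rw [mul_assoc, ← pow_add])
    _ = M * (1 - t)⁻¹ ^ 2 := by
        simp_rw [ENNReal.tsum_mul_left, ENNReal.tsum_geometric, ENNReal.tsum_mul_right,
          ENNReal.tsum_mul_left, ENNReal.tsum_geometric]
        ring

theorem ENNReal.pow_mul_pow_sub_le_pow_add {s ρ t : ℝ≥0∞} (hs : s ≤ t ^ 2) (hρ : ρ ≤ t)
    {k j : ℕ} (hkj : k ≤ j) : s ^ k * ρ ^ (j - k) ≤ t ^ (k + j) :=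
  calc s ^ k * ρ ^ (j - k) ≤ (t ^ 2) ^ k * t ^ (j - k) := by gcongr
    _ = t ^ (k + j) := by rw [← pow_mul, ← pow_add]; congr 1; omega

theorem ENNReal.exists_lt_one_le_le_inv_two_le_sq {a b : ℝ≥0∞} (ha : a < 1) (hb : b < 1) :
    ∃ t < 1, a ≤ t ∧ b ≤ t ∧ 2⁻¹ ≤ t ^ 2 := by
  refine ⟨max (max a b) (2⁻¹ ^ (2⁻¹ : ℝ)),
    max_lt (max_lt ha hb) (ENNReal.rpow_lt_one (by norm_num) (by norm_num)),
    (le_max_left _ _).trans (le_max_left _ _), (le_max_right _ _).trans (le_max_left _ _), ?_⟩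
  calc (2⁻¹ : ℝ≥0∞) = (2⁻¹ ^ (2⁻¹ : ℝ)) ^ 2 := by
        rw [← ENNReal.rpow_natCast, ← ENNReal.rpow_mul]; norm_num
    _ ≤ _ := by gcongr; exact le_max_right _ _

section Cubes

variable {n : ℕ}

theorem measurableSet_cubeSet (a : Fin n → ℝ) (l : ℝ) : MeasurableSet (cubeSet a l) := by
  have : cubeSet a l = univ.pi fun i => Ico (a i) (a i + l) := by ext; simp [cubeSet]
  exact this ▸ MeasurableSet.univ_pi fun _ => measurableSet_Ico

theorem measurableSet_dilateCube (a : Fin n → ℝ) (l r : ℝ) :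
    MeasurableSet (dilateCube a l r) :=
  measurableSet_cubeSet _ _

theorem cubeSet_nonempty (a : Fin n → ℝ) {l : ℝ} (hl : 0 < l) : (cubeSet a l).Nonempty :=
  ⟨a, fun _ => ⟨le_rfl, by linarith⟩⟩

theorem dilateCube_dilateCube (a : Fin n → ℝ) (l r s : ℝ) :
    dilateCube (fun i => a i - (r - 1) * l / 2) (r * l) s = dilateCube a l (s * r) := by
  unfold dilateCube
  congr 1
  · funext i; ring
  · ring

theorem le_infDist_cubeSet_of_notMem_dilateCube {a : Fin n → ℝ} {l r : ℝ} (hl : 0 < l)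
    {x : Fin n → ℝ} (hx : x ∉ dilateCube a l r) :
    (r - 1) * l / 2 ≤ Metric.infDist x (cubeSet a l) := by
  refine (Metric.le_infDist (cubeSet_nonempty a hl)).2 fun y hy => ?_
  simp only [dilateCube, cubeSet, mem_ofPred_eq, mem_Ico, not_forall, not_and_or, not_le,
    not_lt] at hx hy
  obtain ⟨i, hi⟩ := hx
  obtain ⟨hyi, hyi'⟩ := hy i
  refine le_trans ?_ (dist_le_pi_dist x y i)
  rw [Real.dist_eq, le_abs]
  rcases hi with hi | hi
  · right; linarith
  · left; linarith

theorem exists_mem_dilateCube_two_pow (a : Fin n → ℝ) {l : ℝ} (hl : 0 < l)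
    (x : Fin n → ℝ) : ∃ k : ℕ, x ∈ dilateCube a l (2 ^ k) := by
  obtain ⟨k, hk⟩ := pow_unbounded_of_one_lt (2 * dist x a / l + 1) one_lt_two
  refine ⟨k, fun i => ?_⟩
  simp only [mem_Ico]
  have hxi : |x i - a i| ≤ dist x a := (Real.dist_eq _ _).symm.trans_le (dist_le_pi_dist x a i)
  rw [← lt_sub_iff_add_lt, div_lt_iff₀ hl] at hk
  constructor <;> cases abs_le.1 hxi <;> linarith

end Cubes

theorem ReverseDoubling.measure_dilateCube_le {n : ℕ} {μ : Measure (Fin n → ℝ)} {c : ℝ}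
    (hμ : ReverseDoubling μ c) (a : Fin n → ℝ) {l r : ℝ} (hl : 0 < l) (hr : 0 < r)
    (m : ℕ) :
    μ (dilateCube a l r) ≤ ENNReal.ofReal c ^ m * μ (dilateCube a l (2 ^ m * r)) := by
  induction m with
  | zero => simp
  | succ m ih =>
    have hstep := hμ (fun i => a i - (2 ^ m * r - 1) * l / 2) (2 ^ m * r * l) (by positivity)
    rw [dilateCube_dilateCube, ← mul_assoc, ← pow_succ'] at hstep
    calc μ (dilateCube a l r) ≤ ENNReal.ofReal c ^ m * μ (dilateCube a l (2 ^ m * r)) := ih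
      _ ≤ ENNReal.ofReal c ^ m * (ENNReal.ofReal c * μ (dilateCube a l (2 ^ (m + 1) * r))) := by
        gcongr; exact hstep
      _ = _ := by ring

noncomputable def tailKernel {n : ℕ} (a : Fin n → ℝ) (l : ℝ) (x : Fin n → ℝ) : ℝ :=
  l ^ n / (l + Metric.infDist x (cubeSet a l)) ^ n

noncomputable def tailFactor (n : ℕ) (μ : Measure (Fin n → ℝ)) (a : Fin n → ℝ)
    (l q : ℝ) : ℝ≥0∞ :=
  ((ENNReal.ofReal (l ^ n))⁻¹ * ∫⁻ x, ENNReal.ofReal (tailKernel a l x ^ q) ∂μ) ^ (1 / q)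

theorem tailedAp_eq_iSup_tailFactor (n : ℕ) (p p' : ℝ) (σ ω : Measure (Fin n → ℝ)) :
    tailedAp n p p' σ ω = ⨆ (a : Fin n → ℝ) (l : ℝ) (_ : 0 < l),
      tailFactor n ω a l p * tailFactor n σ a l p' :=
  rfl

noncomputable def tailWeight (n k : ℕ) : ℝ≥0∞ :=
  (4 * 2⁻¹ ^ k) ^ n

noncomputable def tailTerm (n : ℕ) (μ : Measure (Fin n → ℝ)) (a : Fin n → ℝ)
    (l q : ℝ) (k : ℕ) : ℝ≥0∞ :=
  tailWeight n k * (μ (dilateCube a l (2 ^ k)) / ENNReal.ofReal (l ^ n)) ^ (1 / q)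

theorem tailWeight_mul_tailWeight_mul_le {n : ℕ} (hn : n ≠ 0) (k j : ℕ) :
    tailWeight n k * tailWeight n j * (2 ^ j) ^ n ≤ 16 ^ n * 2⁻¹ ^ k := by
  have hcancel : (2⁻¹ : ℝ≥0∞) ^ j * 2 ^ j = 1 := by
    rw [← mul_pow, ENNReal.inv_mul_cancel two_ne_zero ENNReal.ofNat_ne_top, one_pow]
  have hdecay : ((2⁻¹ : ℝ≥0∞) ^ k) ^ n ≤ 2⁻¹ ^ k :=
    pow_le_of_le_one zero_le (pow_le_one₀ zero_le (ENNReal.inv_le_one.2 one_le_two)) hn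
  calc tailWeight n k * tailWeight n j * (2 ^ j) ^ n
      = 16 ^ n * (2⁻¹ ^ k) ^ n * (2⁻¹ ^ j * 2 ^ j) ^ n := by
        simp only [tailWeight, ← mul_pow]
        ring_nf
    _ ≤ 16 ^ n * 2⁻¹ ^ k := by
        rw [hcancel, one_pow, mul_one]
        exact mul_le_mul_right hdecay _

theorem scalarAp_comm (n : ℕ) (p p' : ℝ) (σ ω : Measure (Fin n → ℝ)) :
    scalarAp n p p' σ ω = scalarAp n p' p ω σ :=
  iSup_congr fun _ => iSup_congr fun _ => iSup_congr fun _ => mul_comm _ _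

section Tail

variable {n : ℕ} (a : Fin n → ℝ) {l : ℝ} (hl : 0 < l)
include hl

theorem two_pow_succ_mul_le_of_notMem_dilateCube {x : Fin n → ℝ} {m : ℕ}
    (hx : x ∉ dilateCube a l (2 ^ m)) :
    2 ^ (m + 1) * l ≤ 4 * (l + Metric.infDist x (cubeSet a l)) := by
  have := le_infDist_cubeSet_of_notMem_dilateCube hl hx
  rw [pow_succ]
  linarith

theorem ofReal_tailKernel_le_tsum_indicator {q : ℝ} (hq : 0 ≤ q) (x : Fin n → ℝ) :
    ENNReal.ofReal (tailKernel a l x ^ q) ≤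
      ∑' k : ℕ, (dilateCube a l (2 ^ k)).indicator (fun _ => tailWeight n k ^ q) x := by
  classical
  have hex := exists_mem_dilateCube_two_pow a hl x
  obtain ⟨k, hk, hmin⟩ :
      ∃ k, x ∈ dilateCube a l (2 ^ k) ∧ ∀ m < k, x ∉ dilateCube a l (2 ^ m) :=
    ⟨Nat.find hex, Nat.find_spec hex, fun _ => Nat.find_min hex⟩
  set d := Metric.infDist x (cubeSet a l)
  have hd : 0 ≤ d := Metric.infDist_nonneg
  have hscale : 2 ^ k * l ≤ 4 * (l + d) := by
    rcases Nat.eq_zero_or_eq_succ_pred k with h0 | hsucc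
    · rw [h0, pow_zero]; linarith
    · rw [hsucc]
      exact two_pow_succ_mul_le_of_notMem_dilateCube a hl (hmin _ (by omega))
  have hratio : l / (l + d) ≤ 4 * 2⁻¹ ^ k := by
    rw [div_le_iff₀ (by positivity), inv_pow]
    calc l = (2 ^ k)⁻¹ * (2 ^ k * l) := by field_simp
      _ ≤ (2 ^ k)⁻¹ * (4 * (l + d)) := by gcongr
      _ = 4 * (2 ^ k)⁻¹ * (l + d) := by ring
  calc ENNReal.ofReal (tailKernel a l x ^ q)
      ≤ ENNReal.ofReal (((4 * 2⁻¹ ^ k) ^ n) ^ q) := by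
        rw [tailKernel, ← div_pow]; gcongr
    _ = tailWeight n k ^ q := by
        rw [← ENNReal.ofReal_rpow_of_nonneg (by positivity) hq]
        simp [tailWeight, ENNReal.ofReal_pow, ENNReal.ofReal_mul, ENNReal.ofReal_inv_of_pos,
          ENNReal.inv_pow]
    _ = (dilateCube a l (2 ^ k)).indicator (fun _ => tailWeight n k ^ q) x := by
        rw [indicator_of_mem hk]
    _ ≤ _ := ENNReal.le_tsum k

theorem lintegral_tailKernel_le {q : ℝ} (hq : 0 ≤ q) (μ : Measure (Fin n → ℝ)) :
    ∫⁻ x, ENNReal.ofReal (tailKernel a l x ^ q) ∂μ ≤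
      ∑' k : ℕ, tailWeight n k ^ q * μ (dilateCube a l (2 ^ k)) :=
  calc _ ≤ ∫⁻ x, ∑' k : ℕ,
          (dilateCube a l (2 ^ k)).indicator (fun _ => tailWeight n k ^ q) x ∂μ :=
        lintegral_mono (ofReal_tailKernel_le_tsum_indicator a hl hq)
    _ = _ := by
        rw [lintegral_tsum fun k =>
          (measurable_const.indicator (measurableSet_dilateCube _ _ _)).aemeasurable]
        simp_rw [lintegral_indicator_const (measurableSet_dilateCube _ _ _)]

theorem tailFactor_le_tsum_tailTerm {q : ℝ} (hq : 1 ≤ q) (μ : Measure (Fin n → ℝ)) :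
    tailFactor n μ a l q ≤ ∑' k, tailTerm n μ a l q k := by
  have hq0 : 0 < q := by linarith
  set L := ENNReal.ofReal (l ^ n)
  calc tailFactor n μ a l q
      ≤ (L⁻¹ * ∑' k : ℕ, tailWeight n k ^ q * μ (dilateCube a l (2 ^ k))) ^ (1 / q) := by
        unfold tailFactor; gcongr; exact lintegral_tailKernel_le a hl hq0.le μ
    _ = (∑' k : ℕ, tailWeight n k ^ q * (μ (dilateCube a l (2 ^ k)) / L)) ^ (1 / q) := by
        rw [← ENNReal.tsum_mul_left]
        congr 1
        refine tsum_congr fun k => ?_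
        rw [div_eq_mul_inv]
        ring
    _ ≤ ∑' k : ℕ, (tailWeight n k ^ q * (μ (dilateCube a l (2 ^ k)) / L)) ^ (1 / q) :=
        ENNReal.rpow_tsum_le_tsum_rpow _ (by positivity) ((div_le_one hq0).2 hq)
    _ = ∑' k, tailTerm n μ a l q k := by
        refine tsum_congr fun k => ?_
        rw [ENNReal.mul_rpow_of_nonneg _ _ (by positivity), ← ENNReal.rpow_mul,
          mul_one_div_cancel hq0.ne', ENNReal.rpow_one]
        rfl

theorem rpow_mul_rpow_le_scalarAp_of_dilateCube {p p' : ℝ} (hp : 0 ≤ p) (hp' : 0 ≤ p')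
    (hpp' : 1 / p + 1 / p' = 1) (σ ω : Measure (Fin n → ℝ)) {r : ℝ} (hr : 0 < r) :
    (ω (dilateCube a l r) / ENNReal.ofReal (l ^ n)) ^ (1 / p) *
        (σ (dilateCube a l r) / ENNReal.ofReal (l ^ n)) ^ (1 / p') ≤
      ENNReal.ofReal (r ^ n) * scalarAp n p p' σ ω := by
  set e := ENNReal.ofReal (r ^ n)
  have he0 : e ≠ 0 := (ENNReal.ofReal_pos.2 (by positivity)).ne'
  have hrescale (ν : Measure (Fin n → ℝ)) :
      ν (dilateCube a l r) / ENNReal.ofReal (l ^ n) =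
        e * (ν (dilateCube a l r) / ENNReal.ofReal ((r * l) ^ n)) := by
    rw [mul_pow, ENNReal.ofReal_mul (by positivity), ← mul_div_assoc,
      ENNReal.mul_div_mul_left _ _ he0 ENNReal.ofReal_ne_top]
  have hcube : (σ (dilateCube a l r) / ENNReal.ofReal ((r * l) ^ n)) ^ (1 / p') *
      (ω (dilateCube a l r) / ENNReal.ofReal ((r * l) ^ n)) ^ (1 / p) ≤ scalarAp n p p' σ ω :=
    le_iSup_of_le (fun i => a i - (r - 1) * l / 2)
      (le_iSup_of_le (r * l) (le_iSup_of_le (by positivity) le_rfl))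
  calc _ = (e ^ (1 / p) * e ^ (1 / p')) *
        ((σ (dilateCube a l r) / ENNReal.ofReal ((r * l) ^ n)) ^ (1 / p') *
          (ω (dilateCube a l r) / ENNReal.ofReal ((r * l) ^ n)) ^ (1 / p)) := by
        rw [hrescale ω, hrescale σ, ENNReal.mul_rpow_of_nonneg _ _ (by positivity),
          ENNReal.mul_rpow_of_nonneg _ _ (by positivity)]
        ring
    _ ≤ e * scalarAp n p p' σ ω := by
        rw [← ENNReal.rpow_add _ _ he0 ENNReal.ofReal_ne_top, hpp', ENNReal.rpow_one]
        gcongr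

theorem tailTerm_mul_tailTerm_le (hn : n ≠ 0) {p p' c : ℝ} (hp : 0 ≤ p) (hp' : 0 ≤ p')
    (hpp' : 1 / p + 1 / p' = 1) {σ ω : Measure (Fin n → ℝ)} (hω : ReverseDoubling ω c)
    {k j : ℕ} (hkj : k ≤ j) :
    tailTerm n ω a l p k * tailTerm n σ a l p' j ≤
      16 ^ n * scalarAp n p p' σ ω * (2⁻¹ ^ k * (ENNReal.ofReal c ^ (1 / p)) ^ (j - k)) := by
  set L := ENNReal.ofReal (l ^ n)
  set ρ := ENNReal.ofReal c ^ (1 / p)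
  have hgrowth :
      ω (dilateCube a l (2 ^ k)) ≤ ENNReal.ofReal c ^ (j - k) * ω (dilateCube a l (2 ^ j)) := by
    have := hω.measure_dilateCube_le a hl (by positivity : (0 : ℝ) < 2 ^ k) (j - k)
    rwa [← pow_add, Nat.sub_add_cancel hkj] at this
  have hω' : (ω (dilateCube a l (2 ^ k)) / L) ^ (1 / p) ≤
      ρ ^ (j - k) * (ω (dilateCube a l (2 ^ j)) / L) ^ (1 / p) :=
    calc _ ≤ (ENNReal.ofReal c ^ (j - k) * (ω (dilateCube a l (2 ^ j)) / L)) ^ (1 / p) := by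
          rw [← mul_div_assoc]; gcongr
      _ = _ := by
          rw [ENNReal.mul_rpow_of_nonneg _ _ (by positivity), ← ENNReal.rpow_natCast_mul,
            mul_comm ((j - k : ℕ) : ℝ), ENNReal.rpow_mul_natCast]
  have hAp := rpow_mul_rpow_le_scalarAp_of_dilateCube a hl hp hp' hpp' σ ω
    (by positivity : (0 : ℝ) < 2 ^ j)
  rw [ENNReal.ofReal_pow (by positivity : (0 : ℝ) ≤ 2 ^ j), ENNReal.ofReal_pow zero_le_two,
    ENNReal.ofReal_ofNat] at hAp
  calc tailTerm n ω a l p k * tailTerm n σ a l p' j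
      ≤ tailWeight n k * (ρ ^ (j - k) * (ω (dilateCube a l (2 ^ j)) / L) ^ (1 / p)) *
          (tailWeight n j * (σ (dilateCube a l (2 ^ j)) / L) ^ (1 / p')) := by
        unfold tailTerm; gcongr
    _ = tailWeight n k * tailWeight n j * ρ ^ (j - k) *
          ((ω (dilateCube a l (2 ^ j)) / L) ^ (1 / p) *
            (σ (dilateCube a l (2 ^ j)) / L) ^ (1 / p')) := by ring
    _ ≤ tailWeight n k * tailWeight n j * ρ ^ (j - k) *
          ((2 ^ j) ^ n * scalarAp n p p' σ ω) := by gcongr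
    _ = tailWeight n k * tailWeight n j * (2 ^ j) ^ n * ρ ^ (j - k) * scalarAp n p p' σ ω := by
        ring
    _ ≤ 16 ^ n * 2⁻¹ ^ k * ρ ^ (j - k) * scalarAp n p p' σ ω := by
        gcongr ?_ * _ * _; exact tailWeight_mul_tailWeight_mul_le hn k j
    _ = _ := by ring

theorem tailTerm_mul_tailTerm_le_pow (hn : n ≠ 0) {p p' cσ cω : ℝ} (hp : 0 ≤ p)
    (hp' : 0 ≤ p') (hpp' : 1 / p + 1 / p' = 1) {σ ω : Measure (Fin n → ℝ)}
    (hσ : ReverseDoubling σ cσ) (hω : ReverseDoubling ω cω) {t : ℝ≥0∞}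
    (ht : 2⁻¹ ≤ t ^ 2) (hσt : ENNReal.ofReal cσ ^ (1 / p') ≤ t)
    (hωt : ENNReal.ofReal cω ^ (1 / p) ≤ t) (k j : ℕ) :
    tailTerm n ω a l p k * tailTerm n σ a l p' j ≤
      16 ^ n * scalarAp n p p' σ ω * t ^ (k + j) := by
  rcases le_total k j with hkj | hjk
  · refine (tailTerm_mul_tailTerm_le a hl hn hp hp' hpp' hω hkj).trans ?_
    gcongr _ * ?_
    exact ENNReal.pow_mul_pow_sub_le_pow_add ht hωt hkj
  · rw [mul_comm, scalarAp_comm, add_comm]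
    refine (tailTerm_mul_tailTerm_le a hl hn hp' hp (by rw [add_comm, hpp']) hσ hjk).trans ?_
    gcongr _ * ?_
    exact ENNReal.pow_mul_pow_sub_le_pow_add ht hσt hjk

end Tail

theorem stmt6_general (n : ℕ) (hn : 1 ≤ n) (p p' : ℝ) (hp : 1 < p) (hpp' : 1 / p + 1 / p' = 1)
    (cσ cω : ℝ) (hcσ1 : cσ < 1) (hcω1 : cω < 1) :
    ∃ C : ℝ≥0∞, 0 < C ∧ C < ∞ ∧
      ∀ (σ ω : Measure (Fin n → ℝ)) [IsLocallyFiniteMeasure σ] [IsLocallyFiniteMeasure ω],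
        ReverseDoubling σ cσ → ReverseDoubling ω cω →
        tailedAp n p p' σ ω ≤ C * scalarAp n p p' σ ω := by
  have hpq : p.HolderConjugate p' :=
    Real.holderConjugate_iff.2 ⟨hp, by simpa only [one_div] using hpp'⟩
  obtain ⟨t, ht, hωt, hσt, ht2⟩ := ENNReal.exists_lt_one_le_le_inv_two_le_sq
    (ENNReal.rpow_lt_one (ENNReal.ofReal_lt_one.2 hcω1) (one_div_pos.2 hpq.pos))
    (ENNReal.rpow_lt_one (ENNReal.ofReal_lt_one.2 hcσ1) (one_div_pos.2 hpq.symm.pos))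
  have hgeom : (1 - t)⁻¹ ≠ 0 ∧ (1 - t)⁻¹ ≠ ∞ :=
    ⟨ENNReal.inv_ne_zero.2 (ENNReal.sub_ne_top ENNReal.one_ne_top),
      ENNReal.inv_ne_top.2 (tsub_pos_of_lt ht).ne'⟩
  refine ⟨16 ^ n * (1 - t)⁻¹ ^ 2, ENNReal.mul_pos (by positivity) (pow_ne_zero 2 hgeom.1),
    ENNReal.mul_lt_top (by simp) (pow_lt_top hgeom.2.lt_top), fun σ ω _ _ hσ hω => ?_⟩
  rw [tailedAp_eq_iSup_tailFactor]
  refine iSup_le fun a => iSup_le fun l => iSup_le fun hl => ?_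
  refine (mul_le_mul' (tailFactor_le_tsum_tailTerm a hl hp.le ω)
    (tailFactor_le_tsum_tailTerm a hl hpq.symm.lt.le σ)).trans ?_
  rw [mul_right_comm]
  exact ENNReal.tsum_mul_tsum_le_of_le_geometric
    (tailTerm_mul_tailTerm_le_pow a hl (by omega) hpq.nonneg hpq.symm.nonneg hpp' hσ hω ht2
      hσt hωt)

/-- For reverse doubling measures `σ, ω`, the two-tailed Muckenhoupt characteristic is
controlled by the scalar one: `𝒜_p(σ,ω) ≲ A_p(σ,ω)`, with constant depending only on
`p`, `n` and the reverse doubling constants. -/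
theorem stmt6 (n : ℕ) (hn : 1 ≤ n) (p p' : ℝ) (hp : 1 < p) (hpp' : 1 / p + 1 / p' = 1)
    (cσ cω : ℝ) (hcσ : 0 < cσ) (hcσ1 : cσ < 1) (hcω : 0 < cω) (hcω1 : cω < 1) :
    ∃ C : ℝ≥0∞, 0 < C ∧ C < ∞ ∧
      ∀ (σ ω : Measure (Fin n → ℝ)) [IsLocallyFiniteMeasure σ] [IsLocallyFiniteMeasure ω],
        ReverseDoubling σ cσ → ReverseDoubling ω cω →
        tailedAp n p p' σ ω ≤ C * scalarAp n p p' σ ω :=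
  stmt6_general n hn p p' hp hpp' cσ cω hcσ1 hcω1
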